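/- Let f : ℝ^s → ℂ be one-periodic in each variable and continuous, with absolutely summable Fourier coefficients, i.e. ∑_{k ∈ ℤ^s} |f̃(k)| < ∞. Then for every L ∈ ℕ, (1/L^s)·∑_{ℓ ∈ {0,1,…,L−1}^s} f(ℓ/L) = ∑_{k ∈ ℤ^s} f̃(L·k). -/

import Mathlib

open scoped BigOperators
open MeasureTheory

/-- The Fourier coefficient `f̃(k) = ∫_{[0,1]^s} f(x) e^{-2πi k·x} dx`. -/
noncomputable def fcoeff (s : ℕ) (f : (Fin s → ℝ) → ℂ) (k : Fin s → ℤ) : ℂ :=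
  ∫ x in Set.pi Set.univ (fun _ : Fin s => Set.Icc (0 : ℝ) 1),
    f x * Complex.exp (-(2 * (Real.pi : ℂ) * Complex.I) * ∑ j : Fin s, (k j : ℂ) * (x j : ℂ))

namespace Stmt5
open Set Complex Submodule

noncomputable section

/-- the unit cube -/
def Qc (s : ℕ) : Set (Fin s → ℝ) := Set.pi Set.univ (fun _ => Set.Icc (0:ℝ) 1)

/-- the character -/
def eK (s : ℕ) (k : Fin s → ℤ) : (Fin s → ℝ) → ℂ :=
  fun x => Complex.exp ((2 * (Real.pi:ℂ) * Complex.I) * ∑ j, (k j : ℂ) * (x j : ℂ))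

lemma vol_cube (s : ℕ) : volume (Qc s) = 1 := by
  rw [Qc, volume_pi_pi]
  simp [Real.volume_Icc]

lemma pi_restrict (s : ℕ) :
    Measure.pi (fun _ : Fin s => volume.restrict (Set.Icc (0:ℝ) 1))
      = volume.restrict (Qc s) := by
  refine Measure.pi_eq fun t ht => ?_
  rw [Measure.restrict_apply (MeasurableSet.univ_pi ht), Qc, ← Set.pi_inter_distrib,
    volume_pi_pi]
  exact Finset.prod_congr rfl fun i _ => (Measure.restrict_apply (ht i)).symm

theorem integral_pi_prod {n : ℕ} {α : Fin n → Type*} [∀ i, MeasurableSpace (α i)]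
    (μ : ∀ i, Measure (α i)) [∀ i, SigmaFinite (μ i)] (f : ∀ i, α i → ℂ) :
    ∫ x, ∏ i, f i (x i) ∂Measure.pi μ = ∏ i, ∫ x, f i x ∂μ i := by
  induction n with
  | zero => simp [integral_const, Measure.pi_univ, Measure.real]
  | succ n ih =>
      calc
        _ = ∫ x : α 0 × ((i : Fin n) → α (Fin.succ i)),
            f 0 x.1 * ∏ i : Fin n, f (Fin.succ i) (x.2 i)
              ∂((μ 0).prod (Measure.pi fun i => μ ((0:Fin (n+1)).succAbove i))) := by
          rw [← ((measurePreserving_piFinSuccAbove μ 0).symm).integral_comp']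
          simp_rw [MeasurableEquiv.piFinSuccAbove_symm_apply, Fin.insertNthEquiv,
            Fin.prod_univ_succ, Fin.insertNth_zero, Equiv.coe_fn_mk, Fin.cons_succ,
            Fin.zero_succAbove, Fin.cons_zero]
          rfl
        _ = (∫ x, f 0 x ∂μ 0) * ∏ i : Fin n, ∫ x, f (Fin.succ i) x ∂μ (Fin.succ i) := by
          rw [← ih, ← integral_prod_mul]
          simp_rw [Fin.zero_succAbove]
          rfl
        _ = ∏ i, ∫ x, f i x ∂μ i := by rw [Fin.prod_univ_succ]

lemma integral_cube_prod {s : ℕ} (g : Fin s → ℝ → ℂ) :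
    ∫ x in Qc s, ∏ j, g j (x j) = ∏ j, ∫ t in Set.Icc (0:ℝ) 1, g j t := by
  rw [← pi_restrict]
  exact integral_pi_prod _ _

lemma integral01_char (n : ℤ) :
    (∫ t in Set.Icc (0:ℝ) 1, Complex.exp ((2 * (Real.pi:ℂ) * Complex.I) * ((n:ℂ) * (t:ℂ))))
      = if n = 0 then 1 else 0 := by
  rw [MeasureTheory.integral_Icc_eq_integral_Ioc,
    ← intervalIntegral.integral_of_le (zero_le_one : (0:ℝ) ≤ 1)]
  by_cases hn : n = 0
  · simp [hn]
  · rw [if_neg hn]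
    have hc : (2 * (Real.pi:ℂ) * Complex.I) * (n:ℂ) ≠ 0 := by
      apply mul_ne_zero
      · simp [Real.pi_ne_zero, Complex.I_ne_zero]
      · exact_mod_cast hn
    have : ∀ t : ℝ, (2 * (Real.pi:ℂ) * Complex.I) * ((n:ℂ) * (t:ℂ))
        = ((2 * (Real.pi:ℂ) * Complex.I) * (n:ℂ)) * (t:ℂ) := fun t => by ring
    simp_rw [this]
    rw [integral_exp_mul_complex hc]
    have h1 : (2 * (Real.pi:ℂ) * Complex.I) * (n:ℂ) * (1:ℝ) = (n:ℂ) * (2 * Real.pi * Complex.I) := by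
      push_cast; ring
    have h0 : (2 * (Real.pi:ℂ) * Complex.I) * (n:ℂ) * (0:ℝ) = 0 := by
      push_cast; ring
    rw [h1, h0, Complex.exp_int_mul_two_pi_mul_I, Complex.exp_zero, sub_self, zero_div]

lemma eK_prod {s : ℕ} (k : Fin s → ℤ) (x : Fin s → ℝ) :
    eK s k x = ∏ j, Complex.exp ((2 * (Real.pi:ℂ) * Complex.I) * ((k j : ℂ) * (x j : ℂ))) := by
  rw [eK, ← Complex.exp_sum, Finset.mul_sum]

lemma integral_eK {s : ℕ} (k : Fin s → ℤ) :
    (∫ x in Qc s, eK s k x) = if k = 0 then 1 else 0 := by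
  have hQ : MeasurableSet (Qc s) := MeasurableSet.univ_pi fun _ => measurableSet_Icc
  rw [MeasureTheory.setIntegral_congr_fun hQ (fun x _ => eK_prod k x),
    integral_cube_prod (fun j (t : ℝ) =>
      Complex.exp ((2 * (Real.pi:ℂ) * Complex.I) * ((k j : ℂ) * (t:ℂ))))]
  simp_rw [integral01_char]
  by_cases hk : k = 0
  · simp [hk]
  · rw [if_neg hk]
    obtain ⟨j, hj⟩ : ∃ j, k j ≠ 0 := by
      by_contra hc
      push_neg at hc
      exact hk (funext hc)
    exact Finset.prod_eq_zero (Finset.mem_univ j) (if_neg hj)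

lemma measurableSet_Qc (s : ℕ) : MeasurableSet (Qc s) :=
  MeasurableSet.univ_pi fun _ => measurableSet_Icc

lemma isCompact_Qc (s : ℕ) : IsCompact (Qc s) :=
  isCompact_univ_pi fun _ => isCompact_Icc

lemma eK_continuous {s : ℕ} (k : Fin s → ℤ) : Continuous (eK s k) :=
  Complex.continuous_exp.comp <| continuous_const.mul <|
    continuous_finset_sum _ fun j _ =>
      continuous_const.mul (Complex.continuous_ofReal.comp (continuous_apply j))

lemma norm_eK {s : ℕ} (k : Fin s → ℤ) (x : Fin s → ℝ) : ‖eK s k x‖ = 1 := by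
  have h : (2 * (Real.pi:ℂ) * Complex.I) * ∑ j, (k j : ℂ) * (x j : ℂ)
      = ((2 * Real.pi * ∑ j, (k j : ℝ) * x j : ℝ) : ℂ) * Complex.I := by
    push_cast
    ring
  rw [eK, h]
  exact Complex.norm_exp_ofReal_mul_I _

lemma eK_mul {s : ℕ} (k m : Fin s → ℤ) (x : Fin s → ℝ) :
    eK s k x * eK s m x = eK s (k + m) x := by
  rw [eK, eK, eK, ← Complex.exp_add]
  congr 1
  rw [← mul_add, ← Finset.sum_add_distrib]
  congr 1
  refine Finset.sum_congr rfl fun j _ => ?_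
  simp only [Pi.add_apply]
  push_cast
  ring

lemma eK_zero {s : ℕ} (x : Fin s → ℝ) : eK s 0 x = 1 := by
  simp [eK]

lemma integrableOn_cube {s : ℕ} {u : (Fin s → ℝ) → ℂ} (hu : Continuous u) :
    IntegrableOn u (Qc s) volume :=
  hu.continuousOn.integrableOn_compact (isCompact_Qc s)

/-- integer translation in one coordinate -/
lemma update_int_periodic {s : ℕ} {u : (Fin s → ℝ) → ℂ}
    (hp : ∀ (x : Fin s → ℝ) (j : Fin s), u (Function.update x j (x j + 1)) = u x)
    (m : ℤ) (x : Fin s → ℝ) (j : Fin s) :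
    u (Function.update x j (x j + m)) = u x := by
  induction m using Int.induction_on with
  | zero => simp
  | succ n ihn =>
      have h1 : Function.update x j (x j + ((n+1 : ℤ) : ℝ))
          = Function.update (Function.update x j (x j + ((n : ℤ) : ℝ))) j
              ((Function.update x j (x j + ((n : ℤ) : ℝ))) j + 1) := by
        rw [Function.update_self, Function.update_idem]
        push_cast
        ring_nf
      rw [h1, hp, ihn]
  | pred n ihn =>
      set y := Function.update x j (x j + ((-n-1 : ℤ) : ℝ)) with hy
      have h2 : Function.update y j (y j + 1)
          = Function.update x j (x j + ((-n : ℤ) : ℝ)) := by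
        rw [hy, Function.update_self, Function.update_idem]
        push_cast
        ring_nf
      have h3 := hp y j
      rw [h2, ihn] at h3
      exact h3.symm

/-- translation by an integer vector -/
lemma int_vec_periodic {s : ℕ} {u : (Fin s → ℝ) → ℂ}
    (hp : ∀ (x : Fin s → ℝ) (j : Fin s), u (Function.update x j (x j + 1)) = u x)
    (x : Fin s → ℝ) (n : Fin s → ℤ) :
    u (fun j => x j + n j) = u x := by
  classical
  have key : ∀ (t : Finset (Fin s)) (x : Fin s → ℝ),
      u (fun j => x j + if j ∈ t then (n j : ℝ) else 0) = u x := by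
    intro t
    induction t using Finset.induction_on with
    | empty => simp
    | @insert a t' ha ih =>
        intro x
        set y : Fin s → ℝ := fun j => x j + if j ∈ t' then (n j : ℝ) else 0 with hy
        have h1 : (fun j => x j + if j ∈ insert a t' then (n j : ℝ) else 0)
            = Function.update y a (y a + (n a : ℝ)) := by
          funext j
          by_cases hja : j = a
          · subst hja
            simp [hy, Function.update_self, if_neg ha]
          · simp [Function.update_of_ne hja, hy, Finset.mem_insert, hja]
        rw [h1, update_int_periodic hp (n a), ih]
  have := key Finset.univ x
  simpa using this

local instance fact1 : Fact ((0:ℝ) < 1) := ⟨one_pos⟩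

/-- the torus -/
abbrev TT (s : ℕ) := Fin s → AddCircle (1:ℝ)

/-- the quotient map -/
def qmap (s : ℕ) : (Fin s → ℝ) → TT s := fun x j => (x j : AddCircle (1:ℝ))

/-- character on the torus -/
def ET (s : ℕ) (k : Fin s → ℤ) : C(TT s, ℂ) :=
  ⟨fun y => ∏ j, fourier (k j) (y j),
   continuous_finset_prod _ fun j _ =>
     (map_continuous (fourier (k j))).comp (continuous_apply j)⟩

lemma ET_comp_qmap (s : ℕ) (k : Fin s → ℤ) (x : Fin s → ℝ) :
    ET s k (qmap s x) = eK s k x := by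
  show (∏ j, (fourier (k j) ((x j : AddCircle (1:ℝ))) : ℂ)) = _
  have : ∀ j, (fourier (k j) ((x j : AddCircle (1:ℝ))) : ℂ)
      = Complex.exp ((2 * (Real.pi:ℂ) * Complex.I) * ((k j : ℂ) * (x j : ℂ))) := by
    intro j
    rw [fourier_coe_apply]
    norm_num
    ring_nf
  simp_rw [this]
  rw [eK, ← Complex.exp_sum, Finset.mul_sum]

lemma ET_zero (s : ℕ) : ET s 0 = 1 := by
  ext y
  show (∏ j, (fourier ((0 : Fin s → ℤ) j) (y j) : ℂ)) = 1
  simp [fourier_zero]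

lemma ET_mul (s : ℕ) (k m : Fin s → ℤ) : ET s k * ET s m = ET s (k + m) := by
  ext y
  show (∏ j, (fourier (k j) (y j) : ℂ)) * (∏ j, (fourier (m j) (y j) : ℂ)) = _
  rw [← Finset.prod_mul_distrib]
  exact Finset.prod_congr rfl fun j _ => (fourier_add (m := k j) (n := m j) (x := y j)).symm

lemma ET_star (s : ℕ) (k : Fin s → ℤ) : star (ET s k) = ET s (-k) := by
  ext y
  show (starRingEnd ℂ) (∏ j, (fourier (k j) (y j) : ℂ)) = ∏ j, (fourier ((-k) j) (y j) : ℂ)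
  rw [map_prod]
  exact Finset.prod_congr rfl fun j _ => (fourier_neg (n := k j) (x := y j)).symm

/-- the star subalgebra generated by the characters -/
def torusAlg (s : ℕ) : StarSubalgebra ℂ C(TT s, ℂ) where
  toSubalgebra := Algebra.adjoin ℂ (Set.range (ET s))
  star_mem' := by
    intro x hx
    show _ ∈ Algebra.adjoin ℂ (Set.range (ET s))
    have : Algebra.adjoin ℂ (Set.range (ET s)) ≤
        star (Algebra.adjoin ℂ (Set.range (ET s))) := by
      refine Algebra.adjoin_le ?_
      rintro - ⟨k, rfl⟩
      refine Set.mem_star.2 ?_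
      show star (ET s k) ∈ _
      rw [ET_star]
      exact Algebra.subset_adjoin ⟨-k, rfl⟩
    simpa using this hx

theorem torusAlg_coe (s : ℕ) :
    Subalgebra.toSubmodule (torusAlg s).toSubalgebra = span ℂ (Set.range (ET s)) := by
  apply Algebra.adjoin_eq_span_of_subset
  refine Set.Subset.trans ?_ Submodule.subset_span
  intro x hx
  refine Submonoid.closure_induction (fun _ => id) ⟨0, ET_zero s⟩ ?_ hx
  rintro - - - - ⟨m, rfl⟩ ⟨n, rfl⟩
  exact ⟨m + n, (ET_mul s m n).symm⟩

theorem torusAlg_separatesPoints (s : ℕ) : (torusAlg s).SeparatesPoints := by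
  intro y y' hyy
  obtain ⟨j, hj⟩ : ∃ j, y j ≠ y' j := by
    by_contra hc
    push_neg at hc
    exact hyy (funext hc)
  classical
  refine ⟨_, ⟨ET s (Pi.single j 1), Algebra.subset_adjoin ⟨Pi.single j 1, rfl⟩, rfl⟩, ?_⟩
  have hev : ∀ z : TT s, ET s (Pi.single j 1) z = fourier 1 (z j) := by
    intro z
    show (∏ i, (fourier ((Pi.single j 1 : Fin s → ℤ) i) (z i) : ℂ)) = _
    rw [Finset.prod_eq_single j]
    · simp
    · intro i _ hij
      rw [Pi.single_eq_of_ne hij]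
      exact fourier_zero
    · intro h; exact absurd (Finset.mem_univ j) h
  dsimp only
  rw [hev, hev, fourier_one, fourier_one]
  intro hc
  rw [Circle.coe_inj] at hc
  exact hj (AddCircle.injective_toCircle one_ne_zero hc)

theorem span_ET_dense (s : ℕ) :
    Dense ((span ℂ (Set.range (ET s)) : Submodule ℂ C(TT s, ℂ)) : Set C(TT s, ℂ)) := by
  have h1 : (torusAlg s).topologicalClosure = ⊤ :=
    ContinuousMap.starSubalgebra_topologicalClosure_eq_top_of_separatesPoints _
      (torusAlg_separatesPoints s)
  have h2 : (span ℂ (Set.range (ET s))).topologicalClosure = ⊤ := by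
    rw [← torusAlg_coe]
    exact congr_arg (Subalgebra.toSubmodule <| StarSubalgebra.toSubalgebra ·) h1
  rw [dense_iff_closure_eq]
  have h3 : ((span ℂ (Set.range (ET s))).topologicalClosure : Set C(TT s, ℂ))
      = ((⊤ : Submodule ℂ C(TT s, ℂ)) : Set C(TT s, ℂ)) := by rw [h2]
  rw [Submodule.topologicalClosure_coe] at h3
  rw [h3]
  rfl

lemma continuous_qmap (s : ℕ) : Continuous (qmap s) :=
  continuous_pi fun j => (AddCircle.continuous_mk' (1:ℝ)).comp (continuous_apply j)

theorem vanish_on_cube {s : ℕ} (h : (Fin s → ℝ) → ℂ) (hc : Continuous h)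
    (hp : ∀ (x : Fin s → ℝ) (j : Fin s), h (Function.update x j (x j + 1)) = h x)
    (hz : ∀ k : Fin s → ℤ, (∫ x in Qc s, h x * eK s k x) = 0) :
    ∀ x ∈ Qc s, h x = 0 := by
  classical
  -- descend to the torus
  set H : TT s → ℂ := fun y =>
    h (fun j => ((AddCircle.equivIco 1 0 (y j) : Set.Ico (0:ℝ) (0+1)) : ℝ)) with hH
  have Hq : ∀ x, H (qmap s x) = h x := by
    intro x
    have hrep : (fun j => ((AddCircle.equivIco 1 0 ((x j : AddCircle (1:ℝ))) :
        Set.Ico (0:ℝ) (0+1)) : ℝ)) = fun j => x j + ((-⌊x j⌋ : ℤ) : ℝ) := by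
      funext j
      rw [AddCircle.coe_equivIco_mk_apply]
      rw [div_one, mul_one]
      simp only [Int.fract]
      push_cast
      ring
    rw [hH]
    simp only [qmap]
    rw [hrep]
    exact int_vec_periodic hp x _
  have Hcont : Continuous H := by
    have hoq : IsOpenQuotientMap (qmap s) :=
      IsOpenQuotientMap.piMap (fun _ : Fin s => QuotientAddGroup.isOpenQuotientMap_mk)
    rw [hoq.isQuotientMap.continuous_iff]
    have : H ∘ qmap s = h := funext Hq
    rw [this]
    exact hc
  set Hc : C(TT s, ℂ) := ⟨H, Hcont⟩ with hHc
  -- pairing with pullbacks of span elements vanishes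
  have hint : ∀ P : C(TT s, ℂ), IntegrableOn (fun x => h x * P (qmap s x)) (Qc s) volume :=
    fun P => ((hc.mul ((map_continuous P).comp (continuous_qmap s))).continuousOn).integrableOn_compact (isCompact_Qc s)
  have hspan : ∀ P ∈ span ℂ (Set.range (ET s)), (∫ x in Qc s, h x * P (qmap s x)) = 0 := by
    intro P hP
    induction hP using Submodule.span_induction with
    | mem P hPm =>
        obtain ⟨k, rfl⟩ := hPm
        calc (∫ x in Qc s, h x * (ET s k) (qmap s x)) = ∫ x in Qc s, h x * eK s k x := by
              refine setIntegral_congr_fun (measurableSet_Qc s) fun x _ => ?_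
              rw [ET_comp_qmap]
          _ = 0 := hz k
    | zero => simp
    | add P Q hPm hQm ihP ihQ =>
        have : (fun x => h x * (P + Q) (qmap s x))
            = fun x => h x * P (qmap s x) + h x * Q (qmap s x) := by
          funext x; simp [mul_add]
        rw [this, integral_add (hint P) (hint Q), ihP, ihQ, add_zero]
    | smul c P hPm ihP =>
        have : (fun x => h x * (c • P) (qmap s x))
            = fun x => c * (h x * P (qmap s x)) := by
          funext x; simp; ring
        rw [this, MeasureTheory.integral_const_mul, ihP, mul_zero]
  -- conclude ∫ |h|² = 0
  set Z : ℂ := ∫ x in Qc s, h x * (starRingEnd ℂ) (h x) with hZdef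
  have key : ∀ ε : ℝ, 0 < ε → ‖Z‖ ≤ (‖Hc‖ + 1) * ε := by
    intro ε hε
    obtain ⟨P, hPmem, hPd⟩ := (span_ET_dense s).exists_dist_lt (star Hc) hε
    have h0 := hspan P hPmem
    have hZeq : Z = ∫ x in Qc s, h x * ((starRingEnd ℂ) (h x) - P (qmap s x)) := by
      have : (fun x => h x * ((starRingEnd ℂ) (h x) - P (qmap s x)))
          = fun x => h x * (starRingEnd ℂ) (h x) - h x * P (qmap s x) := by
        funext x; ring
      rw [this, integral_sub ?_ (hint P), h0, sub_zero]
      exact ((hc.mul (Complex.continuous_conj.comp hc)).continuousOn).integrableOn_compact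
        (isCompact_Qc s)
    rw [hZeq]
    have hb : ∀ x ∈ Qc s, ‖h x * ((starRingEnd ℂ) (h x) - P (qmap s x))‖ ≤ (‖Hc‖ + 1) * ε := by
      intro x _
      rw [norm_mul]
      have h1 : ‖h x‖ ≤ ‖Hc‖ := by
        rw [← Hq x]
        exact ContinuousMap.norm_coe_le_norm Hc (qmap s x)
      have h2 : ‖(starRingEnd ℂ) (h x) - P (qmap s x)‖ ≤ dist (star Hc) P := by
        have : (starRingEnd ℂ) (h x) - P (qmap s x) = (star Hc - P) (qmap s x) := by
          simp [hHc, Hq x]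
        rw [this]
        exact (ContinuousMap.norm_coe_le_norm (star Hc - P) (qmap s x)).trans
          (by rw [dist_eq_norm])
      calc ‖h x‖ * ‖(starRingEnd ℂ) (h x) - P (qmap s x)‖
          ≤ ‖Hc‖ * dist (star Hc) P := by
            exact mul_le_mul h1 h2 (norm_nonneg _) (norm_nonneg _)
        _ ≤ (‖Hc‖ + 1) * ε := by
            apply mul_le_mul (by linarith [norm_nonneg Hc]) hPd.le dist_nonneg (by positivity)
    calc ‖∫ x in Qc s, h x * ((starRingEnd ℂ) (h x) - P (qmap s x))‖
        ≤ ((‖Hc‖ + 1) * ε) * (volume (Qc s)).toReal :=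
          norm_setIntegral_le_of_norm_le_const (by rw [vol_cube]; exact ENNReal.one_lt_top) hb
      _ = (‖Hc‖ + 1) * ε := by rw [vol_cube]; simp
  have hZ0 : Z = 0 := by
    by_contra hZ
    have hpos : 0 < ‖Z‖ := norm_pos_iff.mpr hZ
    have hM : 0 < ‖Hc‖ + 1 := by positivity
    have hkey := key (‖Z‖ / (2 * (‖Hc‖ + 1))) (by positivity)
    have heq : (‖Hc‖ + 1) * (‖Z‖ / (2 * (‖Hc‖ + 1))) = ‖Z‖ / 2 := by
      field_simp
    rw [heq] at hkey
    linarith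
  -- real version
  have hRe : (∫ x in Qc s, Complex.normSq (h x)) = 0 := by
    have h1 : Z = ((∫ x in Qc s, Complex.normSq (h x) : ℝ) : ℂ) := by
      rw [hZdef]
      calc (∫ x in Qc s, h x * (starRingEnd ℂ) (h x))
          = ∫ x in Qc s, ((Complex.normSq (h x) : ℝ) : ℂ) := by
            refine setIntegral_congr_fun (measurableSet_Qc s) fun x _ => ?_
            rw [Complex.mul_conj]
        _ = ((∫ x in Qc s, Complex.normSq (h x) : ℝ) : ℂ) := integral_ofReal
    rw [hZ0] at h1
    exact_mod_cast h1.symm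
  have hae : (fun x => Complex.normSq (h x)) =ᵐ[volume.restrict (Qc s)] 0 := by
    rw [← integral_eq_zero_iff_of_nonneg (fun x => Complex.normSq_nonneg _)] at *
    · exact hRe
    · exact ((Complex.continuous_normSq.comp hc).continuousOn).integrableOn_compact
        (isCompact_Qc s)
  -- from a.e. to everywhere on the open cube, then closure
  set U : Set (Fin s → ℝ) := Set.pi Set.univ (fun _ => Set.Ioo (0:ℝ) 1) with hU
  have hUopen : IsOpen U := isOpen_set_pi Set.finite_univ fun _ _ => isOpen_Ioo
  have hUsub : U ⊆ Qc s := Set.pi_mono fun _ _ => Set.Ioo_subset_Icc_self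
  have hEqU : Set.EqOn h 0 U := by
    intro x₀ hx₀
    by_contra hne
    set V : Set (Fin s → ℝ) := {x | h x ≠ 0} ∩ U with hV
    have hVopen : IsOpen V := (isOpen_compl_singleton.preimage hc).inter hUopen
    have hVne : V.Nonempty := ⟨x₀, hne, hx₀⟩
    have hVpos : 0 < volume V := hVopen.measure_pos volume hVne
    have hVnull : volume V = 0 := by
      have hN : (volume.restrict (Qc s)) {x | Complex.normSq (h x) ≠ 0} = 0 := by
        have := hae
        rw [Filter.EventuallyEq, ae_iff] at this
        simpa using this
      have hVN : V ⊆ {x | Complex.normSq (h x) ≠ 0} := by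
        intro x hx
        exact fun hc0 => hx.1 (Complex.normSq_eq_zero.mp hc0)
      have h3 : (volume.restrict (Qc s)) V = 0 := measure_mono_null hVN hN
      rw [Measure.restrict_apply hVopen.measurableSet] at h3
      have : V ∩ Qc s = V := Set.inter_eq_self_of_subset_left
        (Set.Subset.trans Set.inter_subset_right hUsub)
      rwa [this] at h3
    exact absurd hVnull hVpos.ne'
  have hclo : closure U = Qc s := by
    rw [hU, closure_pi_set]
    refine Set.pi_congr rfl fun j _ => ?_
    exact closure_Ioo one_ne_zero.symm
  intro x hx
  have : Set.EqOn h 0 (closure U) := hEqU.closure hc continuous_const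
  have := this (by rw [hclo]; exact hx)
  simpa using this

lemma fcoeff_eq_pair {s : ℕ} (f : (Fin s → ℝ) → ℂ) (k : Fin s → ℤ) :
    fcoeff s f k = ∫ x in Qc s, f x * eK s (-k) x := by
  rw [fcoeff, Qc]
  refine setIntegral_congr_fun (MeasurableSet.univ_pi fun _ => measurableSet_Icc)
    fun x _ => ?_
  congr 1
  rw [eK]
  congr 1
  simp only [Pi.neg_apply, Int.cast_neg, neg_mul, Finset.sum_neg_distrib, mul_neg]

/-- periodicity of characters -/
lemma eK_update {s : ℕ} (k : Fin s → ℤ) (x : Fin s → ℝ) (j : Fin s) :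
    eK s k (Function.update x j (x j + 1)) = eK s k x := by
  classical
  have hpt : ∀ i, (k i : ℂ) * ((Function.update x j (x j + 1) i : ℝ) : ℂ)
      = (k i : ℂ) * ((x i : ℝ) : ℂ) + (if i = j then (k j : ℂ) else 0) := by
    intro i
    by_cases hij : i = j
    · subst hij
      rw [Function.update_self, if_pos rfl]
      push_cast
      ring
    · rw [Function.update_of_ne hij, if_neg hij, add_zero]
  rw [eK, eK, Finset.sum_congr rfl (fun i _ => hpt i), Finset.sum_add_distrib,
    Finset.sum_ite_eq' Finset.univ j (fun _ => (k j : ℂ)), if_pos (Finset.mem_univ j),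
    mul_add, Complex.exp_add]
  have h1 : Complex.exp (2 * (Real.pi:ℂ) * Complex.I * (k j : ℂ)) = 1 := by
    have h2 := Complex.exp_int_mul_two_pi_mul_I (k j)
    rw [← h2]
    congr 1
    ring
  rw [h1, mul_one]

/-- the Fourier series -/
def gser (s : ℕ) (c : (Fin s → ℤ) → ℂ) : (Fin s → ℝ) → ℂ :=
  fun x => ∑' k, c k * eK s k x

theorem inversion {s : ℕ} (f : (Fin s → ℝ) → ℂ)
    (hper : ∀ (x : Fin s → ℝ) (j : Fin s), f (Function.update x j (x j + 1)) = f x)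
    (hcont : Continuous f)
    (hsum : Summable fun k : Fin s → ℤ => ‖fcoeff s f k‖) :
    ∀ x ∈ Qc s, f x = ∑' k, fcoeff s f k * eK s k x := by
  classical
  set c : (Fin s → ℤ) → ℂ := fcoeff s f with hc
  set g : (Fin s → ℝ) → ℂ := gser s c with hg
  have hgs : ∀ x : Fin s → ℝ, Summable fun k => c k * eK s k x := by
    intro x
    refine Summable.of_norm ?_
    refine hsum.congr fun k => ?_
    rw [norm_mul, norm_eK, mul_one]
  have hgc : Continuous g := by
    refine continuous_tsum (fun k => continuous_const.mul (eK_continuous k)) hsum ?_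
    intro k x
    rw [norm_mul, norm_eK, mul_one]
  have hgp : ∀ (x : Fin s → ℝ) (j : Fin s), g (Function.update x j (x j + 1)) = g x := by
    intro x j
    rw [hg, gser, gser]
    refine tsum_congr fun k => ?_
    rw [eK_update]
  -- fcoeff of g equals c
  have hfg : ∀ k : Fin s → ℤ, (∫ x in Qc s, g x * eK s k x) = c (-k) := by
    intro k
    have hrw : ∀ x : Fin s → ℝ, g x * eK s k x = ∑' m, c m * eK s (m + k) x := by
      intro x
      rw [hg, gser, ← tsum_mul_right]
      refine tsum_congr fun m => ?_
      rw [mul_assoc, eK_mul]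
    rw [setIntegral_congr_fun (measurableSet_Qc s) fun x _ => hrw x]
    have hswap : (∫ x in Qc s, ∑' m, c m * eK s (m + k) x)
        = ∑' m, ∫ x in Qc s, c m * eK s (m + k) x := by
      refine (MeasureTheory.integral_tsum_of_summable_integral_norm ?_ ?_).symm
      · intro m
        exact (continuous_const.mul (eK_continuous _)).continuousOn.integrableOn_compact
          (isCompact_Qc s)
      · refine hsum.congr fun m => ?_
        have : ∀ x : Fin s → ℝ, ‖c m * eK s (m + k) x‖ = ‖c m‖ := by
          intro x
          rw [norm_mul, norm_eK, mul_one]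
        rw [MeasureTheory.setIntegral_congr_fun (measurableSet_Qc s) fun x _ => this x]
        rw [setIntegral_const, Measure.real, vol_cube]
        simp
    rw [hswap]
    have hterm : ∀ m : Fin s → ℤ, (∫ x in Qc s, c m * eK s (m + k) x)
        = if m = -k then c m else 0 := by
      intro m
      rw [MeasureTheory.integral_const_mul, integral_eK]
      by_cases hm : m = -k
      · rw [if_pos (by rw [hm]; ring), if_pos hm, mul_one]
      · rw [if_neg (fun hc0 => hm (by linear_combination (norm := module) hc0)), if_neg hm,
          mul_zero]
    rw [tsum_congr hterm]
    rw [tsum_eq_single (-k) (fun m hm => if_neg hm)]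
    rw [if_pos rfl]
  -- conclude
  have hfcg : ∀ k : Fin s → ℤ, (∫ x in Qc s, f x * eK s k x) = c (-k) := by
    intro k
    have := fcoeff_eq_pair f (-k)
    rw [neg_neg] at this
    rw [← this, hc]
  have hdiff : ∀ x ∈ Qc s, f x - g x = 0 := by
    refine vanish_on_cube (fun x => f x - g x) (hcont.sub hgc) ?_ ?_
    · intro x j
      rw [hper, hgp]
    · intro k
      have hsubzz : (∫ x in Qc s, (f x - g x) * eK s k x)
          = (∫ x in Qc s, f x * eK s k x) - ∫ x in Qc s, g x * eK s k x := by
        have h1 : (fun x => (f x - g x) * eK s k x)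
            = fun x => f x * eK s k x - g x * eK s k x := by
          funext x; ring
        rw [h1]
        exact integral_sub
          ((hcont.mul (eK_continuous k)).continuousOn.integrableOn_compact (isCompact_Qc s))
          ((hgc.mul (eK_continuous k)).continuousOn.integrableOn_compact (isCompact_Qc s))
      rw [hsubzz, hfg, hfcg, sub_self]
  intro x hx
  have := hdiff x hx
  have h2 : f x = g x := by linear_combination this
  rw [h2, hg]
  rfl

lemma char_sum (L : ℕ) (hL : 1 ≤ L) (n : ℤ) :
    (∑ a : Fin L, Complex.exp ((2 * (Real.pi:ℂ) * Complex.I) * ((n : ℂ) * (((a : ℝ) / (L : ℝ) : ℝ) : ℂ))))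
      = if (L:ℤ) ∣ n then (L:ℂ) else 0 := by
  have hL0 : (L:ℂ) ≠ 0 := by
    exact_mod_cast Nat.pos_of_ne_zero (by omega) |>.ne'
  set w : ℂ := (2 * (Real.pi:ℂ) * Complex.I) * ((n:ℂ) / (L:ℂ)) with hw
  have hterm : ∀ a : Fin L,
      Complex.exp ((2 * (Real.pi:ℂ) * Complex.I) * ((n : ℂ) * (((a : ℝ) / (L : ℝ) : ℝ) : ℂ)))
        = Complex.exp w ^ (a : ℕ) := by
    intro a
    rw [← Complex.exp_nat_mul]
    congr 1
    rw [hw]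
    field_simp
    push_cast
    field_simp
  rw [Finset.sum_congr rfl fun a _ => hterm a]
  rw [Fin.sum_univ_eq_sum_range (fun i => Complex.exp w ^ i)]
  by_cases hdvd : (L:ℤ) ∣ n
  · obtain ⟨m, rfl⟩ := hdvd
    have hw1 : Complex.exp w = 1 := by
      have : w = (m : ℤ) * (2 * (Real.pi:ℂ) * Complex.I) := by
        rw [hw]
        push_cast
        field_simp
      rw [this, Complex.exp_int_mul_two_pi_mul_I]
    rw [if_pos ⟨m, rfl⟩]
    simp [hw1]
  · rw [if_neg hdvd]
    have hz1 : Complex.exp w ≠ 1 := by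
      intro hc
      obtain ⟨t, ht⟩ := Complex.exp_eq_one_iff.mp hc
      apply hdvd
      have h2 : (2 * (Real.pi:ℂ) * Complex.I) ≠ 0 := by
        simp [Real.pi_ne_zero, Complex.I_ne_zero]
      have h3 : (n:ℂ) / (L:ℂ) = (t:ℂ) := by
        have : (2 * (Real.pi:ℂ) * Complex.I) * ((n:ℂ) / (L:ℂ))
            = (2 * (Real.pi:ℂ) * Complex.I) * (t:ℂ) := by
          rw [← hw, ht]; ring
        exact mul_left_cancel₀ h2 this
      have h4 : (n:ℂ) = (t:ℂ) * (L:ℂ) := by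
        field_simp at h3
        linear_combination h3
      have h5 : n = t * L := by exact_mod_cast h4
      exact ⟨t, by linarith⟩
    rw [geom_sum_eq hz1]
    have hzL : Complex.exp w ^ L = 1 := by
      rw [← Complex.exp_nat_mul]
      have : (L:ℂ) * w = (n : ℤ) * (2 * (Real.pi:ℂ) * Complex.I) := by
        rw [hw]
        field_simp
      rw [this, Complex.exp_int_mul_two_pi_mul_I]
    rw [hzL, sub_self, zero_div]

theorem stmt_final (s : ℕ) (L : ℕ) (hL : 1 ≤ L) (f : (Fin s → ℝ) → ℂ)
    (hper : ∀ (x : Fin s → ℝ) (j : Fin s), f (Function.update x j (x j + 1)) = f x)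
    (hcont : Continuous f)
    (hsum : Summable fun k : Fin s → ℤ => ‖fcoeff s f k‖) :
    (1 / (L : ℂ) ^ s) * ∑ ℓ : Fin s → Fin L, f (fun j => (ℓ j : ℝ) / L)
      = ∑' k : Fin s → ℤ, fcoeff s f (fun j => (L : ℤ) * k j) := by
  classical
  set c : (Fin s → ℤ) → ℂ := fcoeff s f with hcdef
  have hLpos : (0:ℝ) < (L:ℝ) := by exact_mod_cast Nat.pos_of_ne_zero (by omega)
  have hLC : (L:ℂ) ≠ 0 := by exact_mod_cast hLpos.ne'
  have hLsC : (L:ℂ)^s ≠ 0 := pow_ne_zero _ hLC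
  have hxQ : ∀ ℓ : Fin s → Fin L, (fun j => (ℓ j : ℝ) / (L:ℝ)) ∈ Qc s := by
    intro ℓ
    rw [Qc, Set.mem_pi]
    intro j _
    constructor
    · positivity
    · rw [div_le_one hLpos]
      have := (ℓ j).is_lt
      exact_mod_cast this.le
  have hinv := inversion f hper hcont hsum
  -- summability facts
  have hs1 : ∀ x : Fin s → ℝ, Summable fun k => c k * eK s k x := by
    intro x
    refine Summable.of_norm (hsum.congr fun k => ?_)
    rw [norm_mul, norm_eK, mul_one]
  -- step 1: replace f by its Fourier series and swap
  have step1 : ∑ ℓ : Fin s → Fin L, f (fun j => (ℓ j : ℝ) / L)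
      = ∑' k, c k * ∑ ℓ : Fin s → Fin L, eK s k (fun j => (ℓ j : ℝ) / L) := by
    rw [Finset.sum_congr rfl fun ℓ _ => hinv _ (hxQ ℓ)]
    rw [← Summable.tsum_finsetSum fun ℓ _ => hs1 _]
    refine tsum_congr fun k => ?_
    rw [Finset.mul_sum]
  -- step 2: the character sum factorizes
  have step2 : ∀ k : Fin s → ℤ, (∑ ℓ : Fin s → Fin L, eK s k (fun j => (ℓ j : ℝ) / L))
      = ∏ j, (if (L:ℤ) ∣ k j then (L:ℂ) else 0) := by
    intro k
    rw [Finset.sum_congr rfl fun ℓ _ => eK_prod k _]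
    have hps := Finset.prod_univ_sum (fun _ : Fin s => (Finset.univ : Finset (Fin L)))
      (fun j (a : Fin L) => Complex.exp ((2 * (Real.pi:ℂ) * Complex.I)
        * ((k j : ℂ) * (((a : ℝ) / (L : ℝ) : ℝ) : ℂ))))
    rw [Fintype.piFinset_univ] at hps
    rw [← hps]
    exact Finset.prod_congr rfl fun j _ => char_sum L hL (k j)
  -- step 3: assemble
  rw [step1]
  simp_rw [step2]
  rw [← tsum_mul_left]
  set F : (Fin s → ℤ) → ℂ := fun k => if (∀ j, (L:ℤ) ∣ k j) then c k else 0 with hF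
  have step3 : ∀ k : Fin s → ℤ,
      (1 / (L:ℂ)^s) * (c k * ∏ j, (if (L:ℤ) ∣ k j then (L:ℂ) else 0)) = F k := by
    intro k
    by_cases hall : ∀ j, (L:ℤ) ∣ k j
    · have : (∏ j, (if (L:ℤ) ∣ k j then (L:ℂ) else 0)) = (L:ℂ)^s := by
        rw [Finset.prod_congr rfl fun j _ => if_pos (hall j), Finset.prod_const,
          Finset.card_univ, Fintype.card_fin]
      simp only [this, hF]
      rw [if_pos hall]
      field_simp
    · obtain ⟨j, hj⟩ := not_forall.mp hall
      have : (∏ j, (if (L:ℤ) ∣ k j then (L:ℂ) else 0)) = 0 :=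
        Finset.prod_eq_zero (Finset.mem_univ j) (if_neg hj)
      simp only [this, hF]
      rw [if_neg hall, mul_zero, mul_zero]
  rw [tsum_congr step3]
  -- step 4: reindex
  have hinj : Function.Injective (fun (m : Fin s → ℤ) (j : Fin s) => (L:ℤ) * m j) := by
    intro m m' hmm
    funext j
    have := congr_fun hmm j
    have hLZ : (L:ℤ) ≠ 0 := by exact_mod_cast hLpos.ne'
    exact mul_left_cancel₀ hLZ this
  have hsupp : Function.support F ⊆ Set.range (fun (m : Fin s → ℤ) (j : Fin s) => (L:ℤ) * m j) := by
    intro k hk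
    have hall : ∀ j, (L:ℤ) ∣ k j := by
      by_contra hcon
      exact hk (by rw [hF]; exact if_neg hcon)
    exact ⟨fun j => k j / L, funext fun j => Int.mul_ediv_cancel' (hall j)⟩
  have step4 := Function.Injective.tsum_eq hinj hsupp (f := F)
  rw [← step4]
  refine tsum_congr fun m => ?_
  simp only [hF]
  rw [if_pos (fun j => dvd_mul_right (L:ℤ) (m j))]

end
end Stmt5

/-- If `f : ℝ^s → ℂ` is continuous, one-periodic in each variable, and has absolutely
summable Fourier coefficients, then for every `L ∈ ℕ`,
`(1/L^s) ∑_{ℓ ∈ {0,…,L-1}^s} f(ℓ/L) = ∑_{k ∈ ℤ^s} f̃(L·k)`. -/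
theorem stmt_5 (s : ℕ) (L : ℕ) (hL : 1 ≤ L) (f : (Fin s → ℝ) → ℂ)
    (hper : ∀ (x : Fin s → ℝ) (j : Fin s), f (Function.update x j (x j + 1)) = f x)
    (hcont : Continuous f)
    (hsum : Summable fun k : Fin s → ℤ => ‖fcoeff s f k‖) :
    (1 / (L : ℂ) ^ s) * ∑ ℓ : Fin s → Fin L, f (fun j => (ℓ j : ℝ) / L)
      = ∑' k : Fin s → ℤ, fcoeff s f (fun j => (L : ℤ) * k j) :=
  Stmt5.stmt_final s L hL f hper hcont hsum
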